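/- arXiv:2006.07202 — 3 statements merged into one kernel-verified Lean document; each statement's English description precedes it below -/
import Mathlib

section
/- Let a be a d×d symmetric positive semidefinite real matrix satisfying the Cordes condition |a|_F² / (Tr a)² ≤ 1/(d−1+ν) for some ν ∈ (0,1], where |·|_F is the Frobenius norm and Tr a > 0. Let γ = Tr(a)/|a|_F². Then for every symmetric d×d matrix M, |γ (a : M) − Tr M| ≤ √(1−ν) · |M|_F, where a : M denotes the Frobenius inner product. -/
/-!
With `γ = Tr a / |a|_F²`, the left-hand side is the Frobenius pairing `(γ a - I) : M`, so by
Cauchy–Schwarz it suffices that `|γ a - I|_F² ≤ 1 - ν`. Expanding,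
`|γ a - I|_F² = γ² |a|_F² - 2 γ Tr a + d`, and this choice of `γ` minimises the quadratic,
with minimum `d - (Tr a)² / |a|_F²`, which the Cordes condition bounds by `1 - ν`.
-/

open Finset Matrix

lemma le_one_div_of_le_one_div {x c : ℝ} (hx : 0 < x) (h : x ≤ 1 / c) : c ≤ 1 / x := by
  rcases le_or_gt c 0 with hc | hc
  · exact hc.trans (by positivity)
  · exact (le_one_div hx hc).1 h

lemma Real.abs_sum_mul_le_sqrt_mul_sqrt {ι : Type*} (s : Finset ι) (f g : ι → ℝ) :
    |∑ i ∈ s, f i * g i| ≤ √(∑ i ∈ s, f i ^ 2) * √(∑ i ∈ s, g i ^ 2) := by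
  refine abs_le.2 ⟨?_, Real.sum_mul_le_sqrt_mul_sqrt s f g⟩
  have := Real.sum_mul_le_sqrt_mul_sqrt s (fun i ↦ -f i) g
  simp only [neg_mul, sum_neg_distrib, neg_sq] at this
  linarith

namespace Matrix

variable {n : Type*} [Fintype n]

lemma abs_sum_sum_mul_le_sqrt_mul_sqrt (A B : Matrix n n ℝ) :
    |∑ i, ∑ j, A i j * B i j| ≤ √(∑ i, ∑ j, A i j ^ 2) * √(∑ i, ∑ j, B i j ^ 2) := by
  simpa only [Fintype.sum_prod_type] using
    Real.abs_sum_mul_le_sqrt_mul_sqrt univ (fun p : n × n ↦ A p.1 p.2) (fun p ↦ B p.1 p.2)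

variable [DecidableEq n]

lemma sum_sum_smul_sub_one_mul (γ : ℝ) (A B : Matrix n n ℝ) :
    ∑ i, ∑ j, (γ • A - 1) i j * B i j = γ * ∑ i, ∑ j, A i j * B i j - B.trace := by
  simp only [sub_apply, smul_apply, smul_eq_mul, one_apply, sub_mul, ite_mul, one_mul,
    zero_mul, sum_sub_distrib, sum_ite_eq, mem_univ, if_true, mul_assoc, mul_sum, trace, diag]

lemma sum_sum_smul_sub_one_sq (γ : ℝ) (A : Matrix n n ℝ) :
    ∑ i, ∑ j, (γ • A - 1) i j ^ 2
      = γ ^ 2 * ∑ i, ∑ j, A i j ^ 2 - 2 * γ * A.trace + Fintype.card n := by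
  have hentry : ∀ i j, (γ • A - 1) i j ^ 2
      = γ ^ 2 * A i j ^ 2 - (if i = j then 2 * γ * A i j else 0) + if i = j then 1 else 0 := by
    intro i j
    by_cases hij : i = j <;> simp [hij] <;> ring
  simp only [hentry, sum_add_distrib, sum_sub_distrib, sum_ite_eq, mem_univ, if_true, mul_sum,
    trace, diag, sum_const, card_univ, nsmul_eq_mul, mul_one]

end Matrix

theorem cordes_pointwise_inequality_general {d : ℕ} (ν : ℝ)
    (a : Matrix (Fin d) (Fin d) ℝ)
    (htr : 0 < a.trace) (hfrob : 0 < ∑ i, ∑ j, (a i j)^2)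
    (hcordes : (∑ i, ∑ j, (a i j)^2) / a.trace^2 ≤ 1 / ((d : ℝ) - 1 + ν)) :
    ∀ M : Matrix (Fin d) (Fin d) ℝ, M.IsSymm →
      |a.trace / (∑ i, ∑ j, (a i j)^2) * (∑ i, ∑ j, a i j * M i j) - M.trace|
        ≤ Real.sqrt (1 - ν) * Real.sqrt (∑ i, ∑ j, (M i j)^2) := by
  intro M _
  set S := ∑ i, ∑ j, a i j ^ 2
  set γ := a.trace / S
  have hcordes' : (d : ℝ) - 1 + ν ≤ a.trace ^ 2 / S := by
    simpa only [one_div_div] using le_one_div_of_le_one_div (by positivity) hcordes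
  have hB : ∑ i, ∑ j, (γ • a - 1) i j ^ 2 ≤ 1 - ν := by
    have hmin : γ ^ 2 * S - 2 * γ * a.trace = -(a.trace ^ 2 / S) := by
      simp only [γ]
      field_simp
      ring
    rw [sum_sum_smul_sub_one_sq, Fintype.card_fin]
    linarith
  calc |γ * ∑ i, ∑ j, a i j * M i j - M.trace|
      = |∑ i, ∑ j, (γ • a - 1) i j * M i j| := by rw [sum_sum_smul_sub_one_mul]
    _ ≤ √(∑ i, ∑ j, (γ • a - 1) i j ^ 2) * √(∑ i, ∑ j, M i j ^ 2) :=
      abs_sum_sum_mul_le_sqrt_mul_sqrt _ _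
    _ ≤ √(1 - ν) * √(∑ i, ∑ j, M i j ^ 2) := by gcongr

/-- Pointwise Cordes inequality (no lower-order terms): if `a` is symmetric positive
semidefinite with `|a|_F²/(Tr a)² ≤ 1/(d-1+ν)`, then with `γ = Tr a / |a|_F²`,
`|γ (a : M) − Tr M| ≤ √(1−ν) |M|_F` for all symmetric `M`. -/
theorem cordes_pointwise_inequality {d : ℕ} (hd : 1 ≤ d) (ν : ℝ)
    (hν0 : 0 < ν) (hν1 : ν ≤ 1)
    (a : Matrix (Fin d) (Fin d) ℝ) (ha : a.IsSymm) (hpsd : a.PosSemidef)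
    (htr : 0 < a.trace) (hfrob : 0 < ∑ i, ∑ j, (a i j)^2)
    (hcordes : (∑ i, ∑ j, (a i j)^2) / a.trace^2 ≤ 1 / ((d : ℝ) - 1 + ν)) :
    ∀ M : Matrix (Fin d) (Fin d) ℝ, M.IsSymm →
      |a.trace / (∑ i, ∑ j, (a i j)^2) * (∑ i, ∑ j, a i j * M i j) - M.trace|
        ≤ Real.sqrt (1 - ν) * Real.sqrt (∑ i, ∑ j, (M i j)^2) :=
  cordes_pointwise_inequality_general ν a htr hfrob hcordes
end

section
/- Let a ∈ ℝ^{d×d} be symmetric, b ∈ ℝ^d, c ≥ 0 a real number, λ > 0 and ν ∈ (0,1], and suppose the Cordes condition (|a|_F² + |b|²/(2λ) + (c/λ)²) / (Tr a + c/λ)² ≤ 1/(d+ν) holds with Tr a + c/λ > 0. Set γ = (Tr a + c/λ) / (|a|_F² + |b|²/(2λ) + c²/λ²). Then for all symmetric matrices M ∈ ℝ^{d×d}, vectors p ∈ ℝ^d and reals r, |γ(a : M + b·p − c r) − (Tr M − λ r)| ≤ √(1−ν) · √(|M|_F² + 2λ|p|² + λ² r²). -/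
/-!
Encode `(M, p, r)` as the vector `x = (M, √(2λ) p, λ r)` of a Euclidean space and the
coefficients as `α = (a, b / √(2λ), -c/λ)` and `e = (I, 0, -1)`. Then `a : M + b·p - c r = ⟪α, x⟫`,
`Tr M - λ r = ⟪e, x⟫`, `|α|² = |a|² + |b|²/(2λ) + (c/λ)²`, `⟪α, e⟫ = Tr a + c/λ`, `|e|² = d + 1`,
and `γ = ⟪α, e⟫ / |α|²`. The left-hand side is `|⟪γ α - e, x⟫|`, and `γ α - e` is minus the
component of `e` orthogonal to `α`, with `|γ α - e|² = |e|² - ⟪α, e⟫² / |α|²`; the Cordes condition says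
exactly that this is at most `1 - ν`, so Cauchy–Schwarz concludes.
-/

open RealInnerProductSpace

section InnerProductSpace

variable {E : Type*} [NormedAddCommGroup E] [InnerProductSpace ℝ E]

theorem norm_inner_div_norm_sq_smul_sub_sq (α e : E) :
    ‖(⟪α, e⟫ / ‖α‖ ^ 2) • α - e‖ ^ 2 = ‖e‖ ^ 2 - ⟪α, e⟫ ^ 2 / ‖α‖ ^ 2 := by
  rcases eq_or_ne α 0 with rfl | hα
  · simp
  have hα2 : ‖α‖ ^ 2 ≠ 0 := by positivity
  rw [norm_sub_sq_real, norm_smul, mul_pow, Real.norm_eq_abs, sq_abs, real_inner_smul_left]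
  field_simp
  ring

theorem abs_inner_div_norm_sq_mul_inner_sub_inner_le {α e : E} {κ : ℝ} (hαe : ⟪α, e⟫ ≠ 0)
    (hcordes : ‖α‖ ^ 2 / ⟪α, e⟫ ^ 2 ≤ 1 / (‖e‖ ^ 2 - κ)) (x : E) :
    |⟪α, e⟫ / ‖α‖ ^ 2 * ⟪α, x⟫ - ⟪e, x⟫| ≤ √κ * ‖x‖ := by
  have hα : 0 < ‖α‖ ^ 2 := by
    have : α ≠ 0 := by rintro rfl; simp at hαe
    positivity
  have hgap : 0 < ‖e‖ ^ 2 - κ := one_div_pos.mp ((div_pos hα (by positivity)).trans_le hcordes)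
  have hresidual : ‖(⟪α, e⟫ / ‖α‖ ^ 2) • α - e‖ ≤ √κ := by
    rw [div_le_div_iff₀ (by positivity) hgap, one_mul] at hcordes
    have : ‖e‖ ^ 2 - κ ≤ ⟪α, e⟫ ^ 2 / ‖α‖ ^ 2 := by rw [le_div_iff₀ hα]; linarith
    rw [← Real.sqrt_sq (norm_nonneg _), norm_inner_div_norm_sq_smul_sub_sq]
    exact Real.sqrt_le_sqrt (by linarith)
  calc |⟪α, e⟫ / ‖α‖ ^ 2 * ⟪α, x⟫ - ⟪e, x⟫|
      = |⟪(⟪α, e⟫ / ‖α‖ ^ 2) • α - e, x⟫| := by rw [inner_sub_left, real_inner_smul_left]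
    _ ≤ ‖(⟪α, e⟫ / ‖α‖ ^ 2) • α - e‖ * ‖x‖ := abs_real_inner_le_norm _ _
    _ ≤ √κ * ‖x‖ := by gcongr

end InnerProductSpace

section Jet

variable {ι : Type*} [Fintype ι]

/-- A second-order jet `(M, p, r)` (Hessian, gradient, value) as one Euclidean vector. -/
def jet (M : Matrix ι ι ℝ) (p : ι → ℝ) (r : ℝ) : EuclideanSpace ℝ ((ι × ι) ⊕ ι ⊕ Unit) :=
  WithLp.toLp 2 (Sum.elim (fun ij ↦ M ij.1 ij.2) (Sum.elim p fun _ ↦ r))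

theorem inner_jet (M N : Matrix ι ι ℝ) (p q : ι → ℝ) (r s : ℝ) :
    ⟪jet M p r, jet N q s⟫ = ∑ i, ∑ j, M i j * N i j + ∑ i, p i * q i + r * s := by
  simp [jet, PiLp.inner_apply, Fintype.sum_sum_type, Fintype.sum_prod_type, mul_comm, add_assoc]

theorem norm_jet (M : Matrix ι ι ℝ) (p : ι → ℝ) (r : ℝ) :
    ‖jet M p r‖ = √(∑ i, ∑ j, M i j ^ 2 + ∑ i, p i ^ 2 + r ^ 2) := by
  rw [← Real.sqrt_sq (norm_nonneg _), ← real_inner_self_eq_norm_sq, inner_jet]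
  simp only [← sq]

variable [DecidableEq ι]

theorem inner_jet_one_zero_neg_one (M : Matrix ι ι ℝ) (p : ι → ℝ) (r : ℝ) :
    ⟪jet 1 0 (-1), jet M p r⟫ = M.trace - r := by
  simp [inner_jet, Matrix.one_apply, Matrix.trace, sub_eq_add_neg]

theorem norm_jet_one_zero_neg_one_sq :
    ‖jet (1 : Matrix ι ι ℝ) 0 (-1)‖ ^ 2 = Fintype.card ι + 1 := by
  rw [norm_jet, Real.sq_sqrt (by positivity)]
  simp [Matrix.one_apply]

end Jet

theorem cordes_pointwise_inequality_lower_order_general {d : ℕ} (ν lam : ℝ)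
    (hlam : 0 < lam)
    (a : Matrix (Fin d) (Fin d) ℝ)
    (b : Fin d → ℝ) (c : ℝ)
    (htr : 0 < a.trace + c / lam)
    (hcordes : ((∑ i, ∑ j, (a i j)^2) + (∑ i, (b i)^2) / (2 * lam) + (c / lam)^2)
        / (a.trace + c / lam)^2 ≤ 1 / ((d : ℝ) + ν)) :
    ∀ M : Matrix (Fin d) (Fin d) ℝ, M.IsSymm → ∀ (p : Fin d → ℝ) (r : ℝ),
      |(a.trace + c / lam)
          / ((∑ i, ∑ j, (a i j)^2) + (∑ i, (b i)^2) / (2 * lam) + c^2 / lam^2)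
          * ((∑ i, ∑ j, a i j * M i j) + (∑ i, b i * p i) - c * r)
        - (M.trace - lam * r)|
        ≤ Real.sqrt (1 - ν)
          * Real.sqrt ((∑ i, ∑ j, (M i j)^2) + 2 * lam * (∑ i, (p i)^2) + lam^2 * r^2) := by
  intro M _ p r
  set s := √(2 * lam)
  have hs : s ^ 2 = 2 * lam := Real.sq_sqrt (by positivity)
  have hs0 : s ≠ 0 := by positivity
  have hαe : ⟪jet a (s⁻¹ • b) (-(c / lam)), jet 1 0 (-1)⟫ = a.trace + c / lam := by
    rw [real_inner_comm, inner_jet_one_zero_neg_one, sub_neg_eq_add]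
  have hα : ‖jet a (s⁻¹ • b) (-(c / lam))‖ ^ 2
      = ∑ i, ∑ j, a i j ^ 2 + (∑ i, b i ^ 2) / (2 * lam) + c ^ 2 / lam ^ 2 := by
    rw [norm_jet, Real.sq_sqrt (by positivity)]
    simp [mul_pow, inv_pow, hs, Finset.mul_sum, div_eq_inv_mul]
  have hαx : ⟪jet a (s⁻¹ • b) (-(c / lam)), jet M (s • p) (lam * r)⟫
      = ∑ i, ∑ j, a i j * M i j + ∑ i, b i * p i - c * r := by
    have hbp (i : Fin d) : s⁻¹ * b i * (s * p i) = b i * p i := by field_simp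
    have hcr : c / lam * (lam * r) = c * r := by field_simp
    simp [inner_jet, hbp, hcr, sub_eq_add_neg]
  have hx : ‖jet M (s • p) (lam * r)‖
      = √(∑ i, ∑ j, M i j ^ 2 + 2 * lam * ∑ i, p i ^ 2 + lam ^ 2 * r ^ 2) := by
    simp [norm_jet, mul_pow, hs, Finset.mul_sum]
  have key := abs_inner_div_norm_sq_mul_inner_sub_inner_le (κ := 1 - ν)
    (x := jet M (s • p) (lam * r))
    (by rw [hαe]; exact htr.ne')
    (by
      rw [hαe, hα, norm_jet_one_zero_neg_one_sq, Fintype.card_fin, ← div_pow]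
      convert hcordes using 3; ring)
  rwa [hαe, hα, hαx, inner_jet_one_zero_neg_one, hx] at key

/-- Pointwise Cordes inequality with lower-order terms. -/
theorem cordes_pointwise_inequality_lower_order {d : ℕ} (ν lam : ℝ)
    (hν0 : 0 < ν) (hν1 : ν ≤ 1) (hlam : 0 < lam)
    (a : Matrix (Fin d) (Fin d) ℝ) (ha : a.IsSymm)
    (b : Fin d → ℝ) (c : ℝ) (hc : 0 ≤ c)
    (htr : 0 < a.trace + c / lam)
    (hcordes : ((∑ i, ∑ j, (a i j)^2) + (∑ i, (b i)^2) / (2 * lam) + (c / lam)^2)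
        / (a.trace + c / lam)^2 ≤ 1 / ((d : ℝ) + ν)) :
    ∀ M : Matrix (Fin d) (Fin d) ℝ, M.IsSymm → ∀ (p : Fin d → ℝ) (r : ℝ),
      |(a.trace + c / lam)
          / ((∑ i, ∑ j, (a i j)^2) + (∑ i, (b i)^2) / (2 * lam) + c^2 / lam^2)
          * ((∑ i, ∑ j, a i j * M i j) + (∑ i, b i * p i) - c * r)
        - (M.trace - lam * r)|
        ≤ Real.sqrt (1 - ν)
          * Real.sqrt ((∑ i, ∑ j, (M i j)^2) + 2 * lam * (∑ i, (p i)^2) + lam^2 * r^2) :=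
  cordes_pointwise_inequality_lower_order_general ν lam hlam a b c htr hcordes
end

section
/- Let ω ∈ (0, π/2) and consider in ℝ² the piecewise affine function v with v(x,y) = y − x·tan(ω) on the triangle K₁ with vertices (0,0), (cos ω, sin ω), (0,1), and v(x,y) = y on the triangle K₂ with vertices (0,0), (0,1), (−1,0). Then v is continuous across the common edge F from (0,0) to (0,1), v vanishes on the boundary edges from (0,0) to (cos ω, sin ω) and from (0,0) to (−1,0), the gradients satisfy |∇(v|_{K_i})(0,0)| ≥ 1 for i = 1,2, and the jump of the normal derivative across F satisfies |[∇v·n]_F| = tan(ω) at every point of F. Consequently any constant C with |∇(v|_K)(0,0)|² ≤ C · ∫_F h_F^{-1} |[∇v·n]|² must satisfy C ≥ tan^{-2}(ω). -/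
open MeasureTheory

lemma one_le_sqrt_sq_add_one_sq (a : ℝ) : 1 ≤ √(a ^ 2 + 1 ^ 2) :=
  Real.one_le_sqrt.mpr (by nlinarith [sq_nonneg a])

lemma inv_le_of_add_one_le_mul {t C : ℝ} (ht : 0 < t) (h : t + 1 ≤ C * t) : t⁻¹ ≤ C :=
  (inv_le_iff_one_le_mul₀ ht).mpr (by linarith)

lemma setIntegral_Icc_zero_one_const (c : ℝ) : ∫ _ in Set.Icc (0 : ℝ) 1, c = c := by
  simp

/-- The corner counterexample: for the piecewise affine function with
`v = y − x tan ω` on `K₁` and `v = y` on `K₂`, continuity across the common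
edge `F = {0}×[0,1]`, vanishing on the two boundary edges, gradient norms `≥ 1`
at the corner, jump of the normal derivative equal to `tan ω`, and the
consequence that any constant `C` in the corner-gradient bound satisfies
`C ≥ tan⁻²(ω)`. -/
theorem corner_counterexample (ω : ℝ) (hω0 : 0 < ω) (hω1 : ω < Real.pi / 2)
    (v1 v2 : ℝ → ℝ → ℝ)
    (hv1 : ∀ x y, v1 x y = y - x * Real.tan ω)
    (hv2 : ∀ x y, v2 x y = y) :
    (∀ y : ℝ, v1 0 y = v2 0 y) ∧
    (∀ t : ℝ, v1 (t * Real.cos ω) (t * Real.sin ω) = 0) ∧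
    (∀ t : ℝ, v2 (-t) 0 = 0) ∧
    (1 ≤ Real.sqrt ((-Real.tan ω)^2 + 1^2)) ∧
    (1 ≤ Real.sqrt ((0:ℝ)^2 + 1^2)) ∧
    (|(-Real.tan ω) - 0| = Real.tan ω) ∧
    (∀ C : ℝ,
      (-Real.tan ω)^2 + 1^2
          ≤ C * ∫ y in Set.Icc (0:ℝ) 1, ((1:ℝ))⁻¹ * |(-Real.tan ω) - 0|^2 →
      ((Real.tan ω)^2)⁻¹ ≤ C) := by
  have htan : 0 < Real.tan ω := Real.tan_pos_of_pos_of_lt_pi_div_two hω0 hω1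
  have hcos : Real.cos ω ≠ 0 :=
    (Real.cos_pos_of_mem_Ioo ⟨by linarith [Real.pi_pos], hω1⟩).ne'
  have hjump : |(-Real.tan ω) - 0| = Real.tan ω := by
    rw [sub_zero, abs_neg, abs_of_pos htan]
  refine ⟨fun y => by rw [hv1, hv2, zero_mul, sub_zero], fun t => ?_, fun t => hv2 (-t) 0,
    one_le_sqrt_sq_add_one_sq _, one_le_sqrt_sq_add_one_sq 0, hjump, fun C hC => ?_⟩
  · rw [hv1, ← Real.tan_mul_cos hcos]
    ring
  · rw [hjump, inv_one, one_mul, setIntegral_Icc_zero_one_const, neg_sq, one_pow] at hC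
    exact inv_le_of_add_one_le_mul (by positivity) hC
end
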